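/- Let q : ℝⁿ → ℝ be a C² function with q(0) = 0 and ∇q(0) = 0. Then for any R > 0, the integral of |q(x)| over the ball {|x| ≤ R} is bounded by C · R^(n+1) times the integral of |x|^(1-n) · ‖D²q(x)‖ over the same ball, where C depends only on n. -/

import Mathlib

/-!
Taylor's formula along the segment from `0` to `x`, with `q 0 = 0` and `∇q 0 = 0`, gives
`|q x| ≤ ‖x‖² ∫₀¹ ‖D²q (s x)‖ ds`. Integrating over the ball, exchanging the integrals and
substituting `y = s x` (which costs a factor `s⁻ⁿ`) turns the right-hand side into
`∫_{‖y‖ ≤ R} ‖y‖² ‖D²q y‖ ∫_{‖y‖/R}^1 s^{-(n+2)} ds dy`, and the inner integral is at most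
`(R / ‖y‖)^{n+1}`, so `C = 1` works. The Bochner integral on the right is not a junk `0` because
`‖y‖^{1-n}` is locally integrable in dimension `n`.
-/

open MeasureTheory Set Metric Module
open scoped Interval

theorem abs_le_integral_abs_iteratedDeriv_two {φ : ℝ → ℝ} (hφ : ContDiff ℝ 2 φ) (h0 : φ 0 = 0)
    (h1 : deriv φ 0 = 0) : |φ 1| ≤ ∫ t in (0 : ℝ)..1, |iteratedDeriv 2 φ t| := by
  have hφ₂ : Continuous (iteratedDeriv 2 φ) := hφ.continuous_iteratedDeriv 2 le_rfl
  have hderiv : ∀ t, HasDerivAt (deriv φ) (iteratedDeriv 2 φ t) t := by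
    intro t
    rw [iteratedDeriv_succ, iteratedDeriv_one]
    exact ((hφ.iterate_deriv' 1 1).differentiable one_ne_zero t).hasDerivAt
  have hderiv_le : ∀ t ∈ Ι (0 : ℝ) 1, ‖deriv φ t‖ ≤ ∫ t in (0 : ℝ)..1, |iteratedDeriv 2 φ t| := by
    rintro t ⟨ht₀, ht₁⟩
    simp only [zero_le_one, min_eq_left, max_eq_right] at ht₀ ht₁
    have hftc : ∫ s in (0 : ℝ)..t, iteratedDeriv 2 φ s = deriv φ t := by
      rw [intervalIntegral.integral_eq_sub_of_hasDerivAt (fun s _ => hderiv s)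
        (hφ₂.intervalIntegrable _ _), h1, sub_zero]
    calc ‖deriv φ t‖ = |∫ s in (0 : ℝ)..t, iteratedDeriv 2 φ s| := by rw [hftc, Real.norm_eq_abs]
      _ ≤ ∫ s in (0 : ℝ)..t, |iteratedDeriv 2 φ s| :=
        intervalIntegral.abs_integral_le_integral_abs ht₀.le
      _ ≤ ∫ s in (0 : ℝ)..1, |iteratedDeriv 2 φ s| :=
        intervalIntegral.integral_mono_interval le_rfl ht₀.le ht₁
          (Filter.Eventually.of_forall fun _ => abs_nonneg _) (hφ₂.abs.intervalIntegrable _ _)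
  have hftc : ∫ t in (0 : ℝ)..1, deriv φ t = φ 1 := by
    rw [intervalIntegral.integral_deriv_eq_sub (fun t _ => hφ.differentiable two_ne_zero t)
      ((hφ.continuous_deriv one_le_two).intervalIntegrable _ _), h0, sub_zero]
  simpa [hftc] using intervalIntegral.norm_integral_le_of_norm_le_const hderiv_le

theorem lintegral_Ioc_indicator_rpow_mul_sq_le (d : ℕ) {r R : ℝ} (hr : 0 ≤ r) (hR : 0 < R) :
    ∫⁻ s in Ioc 0 1,
        {s | r ≤ s * R}.indicator (fun s => ENNReal.ofReal (s ^ (-(d + 2 : ℝ)) * r ^ 2)) s ≤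
      ENNReal.ofReal (R ^ (d + 1) * r ^ (1 - d : ℝ)) := by
  rcases hr.eq_or_lt with rfl | hr
  · simp
  have ht₀ : 0 < r / R := div_pos hr hR
  have hS : {s | r ≤ s * R} = Ici (r / R) := by
    ext s
    simp [div_le_iff₀ hR]
  have hexp : -(d + 2 : ℝ) < -1 := by linarith [d.cast_nonneg (α := ℝ)]
  have hint : IntegrableOn (fun s : ℝ => s ^ (-(d + 2 : ℝ)) * r ^ 2) (Ioi (r / R)) :=
    (integrableOn_Ioi_rpow_of_lt hexp ht₀).mul_const _
  have hvalue : (r / R) ^ (-(d + 2 : ℝ) + 1) / -(-(d + 2 : ℝ) + 1) * r ^ 2 =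
      R ^ (d + 1) * r ^ (1 - d : ℝ) / (d + 1) := by
    have hr' : r ^ (1 - d : ℝ) = r ^ 2 * r ^ (-(d + 1 : ℝ)) := by
      rw [← Real.rpow_natCast, ← Real.rpow_add hr]
      congr 1
      push_cast
      ring
    rw [show -(d + 2 : ℝ) + 1 = -(d + 1) by ring, Real.div_rpow hr.le hR.le, hr',
      Real.rpow_neg hR.le, ← Real.rpow_natCast R]
    push_cast
    field_simp
  calc _ ≤ ∫⁻ s, {s | r ≤ s * R}.indicator
          (fun s => ENNReal.ofReal (s ^ (-(d + 2 : ℝ)) * r ^ 2)) s :=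
        setLIntegral_le_lintegral _ _
    _ = ∫⁻ s in Ioi (r / R), ENNReal.ofReal (s ^ (-(d + 2 : ℝ)) * r ^ 2) := by
        rw [hS, lintegral_indicator measurableSet_Ici, setLIntegral_congr Ioi_ae_eq_Ici.symm]
    _ = ENNReal.ofReal (∫ s in Ioi (r / R), s ^ (-(d + 2 : ℝ)) * r ^ 2) :=
        (ofReal_integral_eq_lintegral_ofReal hint
          (ae_restrict_of_forall_mem measurableSet_Ioi fun s hs => by
            have : 0 < s := ht₀.trans hs
            positivity)).symm
    _ = ENNReal.ofReal (R ^ (d + 1) * r ^ (1 - d : ℝ) / (d + 1)) := by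
        rw [integral_mul_const, integral_Ioi_rpow_of_lt hexp ht₀, neg_div, ← div_neg, hvalue]
    _ ≤ ENNReal.ofReal (R ^ (d + 1) * r ^ (1 - d : ℝ)) :=
        ENNReal.ofReal_le_ofReal
          (div_le_self (by positivity) (by linarith [d.cast_nonneg (α := ℝ)]))

section NormedSpace

variable {E : Type*} [NormedAddCommGroup E] [NormedSpace ℝ E]

theorem iteratedDeriv_comp_smul_right {n : WithTop ℕ∞} {i : ℕ} {q : E → ℝ} (hq : ContDiff ℝ n q)
    (hi : i ≤ n) (x : E) (t : ℝ) :
    iteratedDeriv i (fun s : ℝ => q (s • x)) t = iteratedFDeriv ℝ i q (t • x) fun _ => x := by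
  have := (ContinuousLinearMap.toSpanSingleton ℝ x).iteratedFDeriv_comp_right hq t hi
  rw [iteratedDeriv_eq_iteratedFDeriv]
  exact congr($this fun _ => 1).trans (by simp)

theorem abs_le_sq_norm_mul_integral_norm_iteratedFDeriv_two {q : E → ℝ} (hq : ContDiff ℝ 2 q)
    (h0 : q 0 = 0) (h1 : fderiv ℝ q 0 = 0) (x : E) :
    |q x| ≤ ‖x‖ ^ 2 * ∫ s in (0 : ℝ)..1, ‖iteratedFDeriv ℝ 2 q (s • x)‖ := by
  have hφ : ContDiff ℝ 2 fun s : ℝ => q (s • x) :=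
    hq.comp (ContinuousLinearMap.toSpanSingleton ℝ x).contDiff
  have hφ₁ : deriv (fun s : ℝ => q (s • x)) 0 = 0 := by
    rw [← iteratedDeriv_one, iteratedDeriv_comp_smul_right hq one_le_two, iteratedFDeriv_one_apply,
      zero_smul, h1]
    rfl
  have hφ₂ : ∀ s : ℝ, |iteratedDeriv 2 (fun s : ℝ => q (s • x)) s| ≤
      ‖iteratedFDeriv ℝ 2 q (s • x)‖ * ‖x‖ ^ 2 := by
    intro s
    rw [iteratedDeriv_comp_smul_right hq le_rfl, ← Real.norm_eq_abs]
    simpa using (iteratedFDeriv ℝ 2 q (s • x)).le_opNorm fun _ => x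
  have hH : Continuous fun s : ℝ => ‖iteratedFDeriv ℝ 2 q (s • x)‖ :=
    ((hq.continuous_iteratedFDeriv le_rfl).comp (continuous_id.smul continuous_const)).norm
  calc |q x| = |(fun s : ℝ => q (s • x)) 1| := by simp only [one_smul]
    _ ≤ ∫ s in (0 : ℝ)..1, |iteratedDeriv 2 (fun s : ℝ => q (s • x)) s| :=
      abs_le_integral_abs_iteratedDeriv_two hφ (by simpa using h0) hφ₁
    _ ≤ ∫ s in (0 : ℝ)..1, ‖iteratedFDeriv ℝ 2 q (s • x)‖ * ‖x‖ ^ 2 :=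
      intervalIntegral.integral_mono_on zero_le_one
        ((hφ.continuous_iteratedDeriv 2 le_rfl).abs.intervalIntegrable _ _)
        ((hH.mul continuous_const).intervalIntegrable _ _) fun s _ => hφ₂ s
    _ = ‖x‖ ^ 2 * ∫ s in (0 : ℝ)..1, ‖iteratedFDeriv ℝ 2 q (s • x)‖ := by
      rw [intervalIntegral.integral_mul_const, mul_comm]

theorem ofReal_abs_le_sq_norm_mul_lintegral_norm_iteratedFDeriv_two {q : E → ℝ}
    (hq : ContDiff ℝ 2 q) (h0 : q 0 = 0) (h1 : fderiv ℝ q 0 = 0) (x : E) :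
    ENNReal.ofReal |q x| ≤ ENNReal.ofReal (‖x‖ ^ 2) *
      ∫⁻ s in Ioc (0 : ℝ) 1, ENNReal.ofReal ‖iteratedFDeriv ℝ 2 q (s • x)‖ := by
  have hint : IntegrableOn (fun s : ℝ => ‖iteratedFDeriv ℝ 2 q (s • x)‖) (Ioc 0 1) :=
    ((hq.continuous_iteratedFDeriv le_rfl).comp (continuous_id.smul continuous_const)).norm
      |>.integrableOn_Ioc
  rw [← ofReal_integral_eq_lintegral_ofReal hint (ae_of_all _ fun _ => norm_nonneg _),
    ← ENNReal.ofReal_mul (sq_nonneg _), ← intervalIntegral.integral_of_le zero_le_one]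
  exact ENNReal.ofReal_le_ofReal (abs_le_sq_norm_mul_integral_norm_iteratedFDeriv_two hq h0 h1 x)

variable [MeasurableSpace E] [BorelSpace E] [FiniteDimensional ℝ E]
  (μ : Measure E) [μ.IsAddHaarMeasure]

theorem setLIntegral_closedBall_comp_smul {f : E → ENNReal} (hf : Measurable f) {s : ℝ}
    (hs : 0 < s) (R : ℝ) :
    ∫⁻ x in closedBall 0 R, f (s • x) ∂μ =
      ENNReal.ofReal ((s ^ finrank ℝ E)⁻¹) * ∫⁻ y in closedBall 0 (s * R), f y ∂μ := by
  have hpre : (s • ·) ⁻¹' closedBall (0 : E) (s * R) = closedBall 0 R := by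
    ext x
    simp [norm_smul, abs_of_pos hs, mul_le_mul_iff_right₀ hs]
  have hmap := lintegral_map (μ := μ)
    (hf.indicator (measurableSet_closedBall (x := (0 : E)) (ε := s * R)))
    (measurable_const_smul s)
  rw [Measure.map_addHaar_smul μ hs.ne', lintegral_smul_measure, smul_eq_mul,
    abs_of_pos (by positivity)] at hmap
  rw [← lintegral_indicator measurableSet_closedBall,
    ← lintegral_indicator measurableSet_closedBall, hmap, ← hpre]
  exact lintegral_congr fun x => indicator_comp_right fun x => s • x

theorem setLIntegral_closedBall_sq_norm_mul_comp_smul {H : E → ENNReal} (hH : Measurable H)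
    {s : ℝ} (hs : 0 < s) (R : ℝ) :
    ∫⁻ x in closedBall 0 R, ENNReal.ofReal (‖x‖ ^ 2) * H (s • x) ∂μ =
      ∫⁻ y in closedBall 0 (s * R),
        ENNReal.ofReal (s ^ (-(finrank ℝ E + 2 : ℝ)) * ‖y‖ ^ 2) * H y ∂μ := by
  set G : E → ENNReal := fun y => ENNReal.ofReal ((s ^ 2)⁻¹ * ‖y‖ ^ 2) * H y
  have hG : Measurable G :=
    ((measurable_norm.pow_const 2).const_mul _).ennreal_ofReal.mul hH
  have hG_smul : ∀ x : E, G (s • x) = ENNReal.ofReal (‖x‖ ^ 2) * H (s • x) := by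
    intro x
    simp only [G, norm_smul, Real.norm_of_nonneg hs.le, mul_pow,
      inv_mul_cancel_left₀ (pow_ne_zero 2 hs.ne')]
  have hweight : s ^ (-(finrank ℝ E + 2 : ℝ)) = (s ^ finrank ℝ E)⁻¹ * (s ^ 2)⁻¹ := by
    rw [Real.rpow_neg hs.le, ← mul_inv, ← pow_add, ← Real.rpow_natCast]
    push_cast
    rfl
  simp_rw [← hG_smul]
  rw [setLIntegral_closedBall_comp_smul μ hG hs, ← lintegral_const_mul' _ _ ENNReal.ofReal_ne_top]
  refine lintegral_congr fun y => ?_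
  rw [hweight, mul_assoc, ENNReal.ofReal_mul (by positivity), mul_assoc]

theorem setLIntegral_closedBall_sq_norm_mul_lintegral_comp_smul_le {H : E → ENNReal}
    (hH : Measurable H) {R : ℝ} (hR : 0 < R) :
    ∫⁻ x in closedBall 0 R, ENNReal.ofReal (‖x‖ ^ 2) * (∫⁻ s in Ioc (0 : ℝ) 1, H (s • x)) ∂μ ≤
      ENNReal.ofReal (R ^ (finrank ℝ E + 1)) *
        ∫⁻ y in closedBall 0 R, ENNReal.ofReal (‖y‖ ^ (1 - finrank ℝ E : ℝ)) * H y ∂μ := by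
  -- the integrand after substituting `y = s • x`; the rescaled ball is the constraint `‖y‖ ≤ s R`
  set K : ℝ → E → ENNReal := fun s y =>
    {p : ℝ × E | ‖p.2‖ ≤ p.1 * R}.indicator
      (fun p => ENNReal.ofReal (p.1 ^ (-(finrank ℝ E + 2 : ℝ)) * ‖p.2‖ ^ 2) * H p.2) (s, y)
  have hK : Measurable (Function.uncurry K) :=
    (((measurable_fst.pow_const _).mul (measurable_snd.norm.pow_const 2)).ennreal_ofReal.mul
      (hH.comp measurable_snd)).indicator
      (measurableSet_le measurable_snd.norm (measurable_fst.mul_const R))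
  have hrescale : ∀ s ∈ Ioc (0 : ℝ) 1,
      ∫⁻ x in closedBall 0 R, ENNReal.ofReal (‖x‖ ^ 2) * H (s • x) ∂μ =
        ∫⁻ y in closedBall 0 R, K s y ∂μ := by
    rintro s ⟨hs₀, hs₁⟩
    rw [setLIntegral_closedBall_sq_norm_mul_comp_smul μ hH hs₀,
      ← lintegral_indicator measurableSet_closedBall,
      ← lintegral_indicator measurableSet_closedBall]
    refine lintegral_congr fun y => ?_
    by_cases hy : ‖y‖ ≤ s * R
    · have hyR : ‖y‖ ≤ R := hy.trans (mul_le_of_le_one_left hR.le hs₁)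
      simp [K, Set.indicator_apply, hy, hyR]
    · have hK0 : K s y = 0 := by simp [K, hy]
      rw [indicator_of_notMem (by simpa using hy), indicator_apply_eq_zero.2 fun _ => hK0]
  have hweight : ∀ y : E, ∫⁻ s in Ioc 0 1, K s y ≤
      ENNReal.ofReal (R ^ (finrank ℝ E + 1) * ‖y‖ ^ (1 - finrank ℝ E : ℝ)) * H y := by
    intro y
    calc ∫⁻ s in Ioc 0 1, K s y = ∫⁻ s in Ioc 0 1, {s | ‖y‖ ≤ s * R}.indicator
          (fun s => ENNReal.ofReal (s ^ (-(finrank ℝ E + 2 : ℝ)) * ‖y‖ ^ 2)) s * H y := by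
          refine lintegral_congr fun s => ?_
          by_cases hy : ‖y‖ ≤ s * R <;> simp [K, hy]
      _ = (∫⁻ s in Ioc 0 1, {s | ‖y‖ ≤ s * R}.indicator
          (fun s => ENNReal.ofReal (s ^ (-(finrank ℝ E + 2 : ℝ)) * ‖y‖ ^ 2)) s) * H y :=
          lintegral_mul_const _
            ((((measurable_id.pow_const _).mul_const _).ennreal_ofReal).indicator
              (measurableSet_le measurable_const (measurable_id.mul_const R)))
      _ ≤ _ := by
          gcongr
          exact lintegral_Ioc_indicator_rpow_mul_sq_le _ (norm_nonneg y) hR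
  calc ∫⁻ x in closedBall 0 R, ENNReal.ofReal (‖x‖ ^ 2) * (∫⁻ s in Ioc (0 : ℝ) 1, H (s • x)) ∂μ
      = ∫⁻ x in closedBall 0 R,
          (∫⁻ s in Ioc (0 : ℝ) 1, ENNReal.ofReal (‖x‖ ^ 2) * H (s • x)) ∂μ := by
        simp_rw [lintegral_const_mul' _ _ ENNReal.ofReal_ne_top]
    _ = ∫⁻ s in Ioc (0 : ℝ) 1, ∫⁻ x in closedBall 0 R, ENNReal.ofReal (‖x‖ ^ 2) * H (s • x) ∂μ :=
        lintegral_lintegral_swap (((measurable_fst.norm.pow_const 2).ennreal_ofReal.mul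
          (hH.comp (measurable_snd.smul measurable_fst))).aemeasurable)
    _ = ∫⁻ s in Ioc (0 : ℝ) 1, ∫⁻ y in closedBall 0 R, K s y ∂μ :=
        setLIntegral_congr_fun measurableSet_Ioc hrescale
    _ = ∫⁻ y in closedBall 0 R, (∫⁻ s in Ioc (0 : ℝ) 1, K s y) ∂μ :=
        lintegral_lintegral_swap hK.aemeasurable
    _ ≤ ∫⁻ y in closedBall 0 R,
          ENNReal.ofReal (R ^ (finrank ℝ E + 1) * ‖y‖ ^ (1 - finrank ℝ E : ℝ)) * H y ∂μ :=
        lintegral_mono hweight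
    _ = _ := by
        simp_rw [ENNReal.ofReal_mul (by positivity : (0 : ℝ) ≤ R ^ (finrank ℝ E + 1)), mul_assoc]
        exact lintegral_const_mul' _ _ ENNReal.ofReal_ne_top

theorem locallyIntegrable_norm_rpow (hd : 1 ≤ finrank ℝ E) {p : ℝ} (hp : -finrank ℝ E < p) :
    LocallyIntegrable (fun x : E => ‖x‖ ^ p) μ :=
  locallyIntegrable_of_norm_le_rpow hd (C := 1) (α := -p) (by linarith)
    (ae_of_all _ fun x => by rw [neg_neg, one_mul, Real.norm_of_nonneg (by positivity)])
    (measurable_norm.pow_const p).aestronglyMeasurable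

theorem setIntegral_closedBall_abs_le_of_iteratedFDeriv_two (hd : 1 ≤ finrank ℝ E) {q : E → ℝ}
    (hq : ContDiff ℝ 2 q) (h0 : q 0 = 0) (h1 : fderiv ℝ q 0 = 0) {R : ℝ} (hR : 0 < R) :
    ∫ x in closedBall 0 R, |q x| ∂μ ≤
      R ^ (finrank ℝ E + 1) *
        ∫ x in closedBall 0 R, ‖x‖ ^ (1 - finrank ℝ E : ℝ) * ‖iteratedFDeriv ℝ 2 q x‖ ∂μ := by
  have hH : Continuous fun x => ‖iteratedFDeriv ℝ 2 q x‖ :=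
    (hq.continuous_iteratedFDeriv le_rfl).norm
  have hrhs : IntegrableOn (fun x => ‖x‖ ^ (1 - finrank ℝ E : ℝ) * ‖iteratedFDeriv ℝ 2 q x‖)
      (closedBall 0 R) μ :=
    ((locallyIntegrable_norm_rpow μ hd (by linarith)).integrableOn_isCompact
      (isCompact_closedBall 0 R)).mul_continuousOn hH.continuousOn (isCompact_closedBall 0 R)
  have hlhs : IntegrableOn (fun x => |q x|) (closedBall 0 R) μ :=
    hq.continuous.abs.continuousOn.integrableOn_compact (isCompact_closedBall 0 R)
  refine (ENNReal.ofReal_le_ofReal_iff (by positivity)).1 ?_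
  rw [ofReal_integral_eq_lintegral_ofReal hlhs (ae_of_all _ fun _ => abs_nonneg _),
    ENNReal.ofReal_mul (by positivity),
    ofReal_integral_eq_lintegral_ofReal hrhs (ae_of_all _ fun _ => by positivity)]
  simp_rw [ENNReal.ofReal_mul (Real.rpow_nonneg (norm_nonneg _) _)]
  exact (setLIntegral_mono' measurableSet_closedBall fun x _ =>
    ofReal_abs_le_sq_norm_mul_lintegral_norm_iteratedFDeriv_two hq h0 h1 x).trans
    (setLIntegral_closedBall_sq_norm_mul_lintegral_comp_smul_le μ hH.measurable.ennreal_ofReal hR)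

end NormedSpace

/-- Radial fundamental-theorem-of-calculus lemma: if `q` is `C²` with `q 0 = 0` and
`∇q 0 = 0`, then `∫_{|x| ≤ R} |q| ≲ R^(n+1) ∫_{|x| ≤ R} |x|^(1-n) ‖D²q‖`,
with a constant depending only on the dimension `n`. -/
theorem stmt0 (n : ℕ) (hn : 1 ≤ n) :
    ∃ C > 0, ∀ (q : EuclideanSpace ℝ (Fin n) → ℝ),
      ContDiff ℝ 2 q → q 0 = 0 → fderiv ℝ q 0 = 0 →
      ∀ R > 0,
        ∫ x in Metric.closedBall (0 : EuclideanSpace ℝ (Fin n)) R, |q x| ≤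
          C * R ^ (n + 1) *
            ∫ x in Metric.closedBall (0 : EuclideanSpace ℝ (Fin n)) R,
              ‖x‖ ^ ((1 : ℝ) - n) * ‖iteratedFDeriv ℝ 2 q x‖ := by
  refine ⟨1, one_pos, fun q hq h0 h1 R hR => ?_⟩
  have := setIntegral_closedBall_abs_le_of_iteratedFDeriv_two volume
    (by rwa [finrank_euclideanSpace_fin]) hq h0 h1 hR
  rwa [finrank_euclideanSpace_fin, ← one_mul (R ^ (n + 1))] at this
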